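/- For α > -1 and c > 0, the functions Q̃_n^{(α,c)}(x) := (d^n/dx^n)[w_{α+n,c}(x)] satisfy the four-point recurrence x·Q̃_n^{(α,c)}(x) = (1/c²)·Q̃_{n+2}^{(α,c)}(x) − ((c(α+n+1)+2)/c²)·Q̃_{n+1}^{(α,c)}(x) + ((c(α+2n+1)+1)/c²)·Q̃_n^{(α,c)}(x) − (n/c)·Q̃_{n-1}^{(α,c)}(x) for all x > 0 and n ≥ 1. -/

import Mathlib

/-!
Put `L_v(x) = ∑ xⁱ / (i! Γ(v+i+1))` (`besselSeries`), so that `w_{v,c}(x) = x^v e^{-cx} L_v(x)`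
(`besselWeight`) for `x > 0`.
Since `1/Γ(s) = s/Γ(s+1)` for every real `s`, the series `L_v` is entire for every real `v`, with
`L_v' = L_{v+1}` and `L_v = (v+1) L_{v+1} + x L_{v+2}`. Hence on `(0, ∞)`
`w_v' = w_{v-1} - c w_v` and `x w_v = (v+1) w_{v+1} + w_{v+2}`.
Differentiating the second identity `n` times (Leibniz) gives `x Q̃_n` in terms of `D^n w_{v+1}`,
`D^n w_{v+2}` and `D^{n-1} w_v` (`v = α + n`), and the first identity expresses these through
`Q̃_{n-1}, …, Q̃_{n+2}`.
-/

noncomputable def besselI (ν z : ℝ) : ℝ :=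
  (z / 2) ^ ν * ∑' i : ℕ, (z ^ 2 / 4) ^ i / (Real.Gamma (i + 1) * Real.Gamma (ν + i + 1))

/-- The weight `w_{v,c}(x) = x^{v/2} e^{-c x} I_v(2√x)`. -/
noncomputable def wBessel (v c x : ℝ) : ℝ :=
  x ^ (v / 2) * Real.exp (-c * x) * besselI v (2 * Real.sqrt x)
/-- `Q̃_n^{(α,c)}(x) = (d^n/dx^n) w_{α+n,c}(x)`. -/
noncomputable def Qt (n : ℕ) (α c x : ℝ) : ℝ :=
  iteratedDeriv n (fun y => wBessel (α + n) c y) x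

open Real Filter Topology

-- Unlike `Gamma_add_one`, this holds at `s = 0` too, because `Γ 0 = 0` in Mathlib.
theorem Real.inv_Gamma_eq_self_mul_inv_Gamma_add_one (s : ℝ) :
    (Gamma s)⁻¹ = s * (Gamma (s + 1))⁻¹ := by
  rcases ne_or_eq s 0 with hs | rfl
  · rw [Gamma_add_one hs, mul_inv, mul_inv_cancel_left₀ hs]
  · rw [zero_add, Gamma_zero, inv_zero, zero_mul]

noncomputable def besselTerm (v x : ℝ) (i : ℕ) : ℝ :=
  x ^ i / (Gamma (i + 1) * Gamma (v + i + 1))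

noncomputable def besselSeries (v x : ℝ) : ℝ := ∑' i, besselTerm v x i

lemma besselI_eq_besselSeries (v z : ℝ) :
    besselI v z = (z / 2) ^ v * besselSeries v (z ^ 2 / 4) := rfl

lemma summable_abs_besselTerm (v x : ℝ) : Summable fun i => |besselTerm v x i| := by
  refine .of_norm_bounded_eventually (summable_pow_div_factorial |x|) ?_
  rw [Nat.cofinite_eq_atTop]
  filter_upwards [eventually_ge_atTop ⌈1 - v⌉₊] with i hi
  have hΓ : 1 ≤ Gamma (v + i + 1) := by
    have h2 : 2 ≤ v + i + 1 := by linarith [Nat.ceil_le.mp hi]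
    simpa [Gamma_two] using Gamma_strictMonoOn_Ici.monotoneOn (by simp) h2 h2
  rw [besselTerm, Real.norm_eq_abs, abs_abs, abs_div, abs_mul, abs_pow,
    abs_of_pos (Gamma_pos_of_pos (by positivity : (0:ℝ) < i + 1)), Gamma_nat_eq_factorial,
    abs_of_pos (by linarith : (0:ℝ) < Gamma (v + i + 1))]
  exact div_le_div_of_nonneg_left (by positivity) (by positivity)
    (le_mul_of_one_le_right (by positivity) hΓ)

lemma summable_besselTerm (v x : ℝ) : Summable (besselTerm v x) :=
  (summable_abs_besselTerm v x).of_abs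

lemma hasDerivAt_besselTerm_succ (v x : ℝ) (i : ℕ) :
    HasDerivAt (fun y => besselTerm v y (i + 1)) (besselTerm (v + 1) x i) x := by
  have hi : Gamma ((i + 1 : ℕ) + 1) = (i + 1) * Gamma (i + 1) := by
    push_cast; exact Gamma_add_one (by positivity)
  refine ((hasDerivAt_pow (i + 1) x).div_const _).congr_deriv ?_
  rw [besselTerm, hi, Nat.add_sub_cancel]
  push_cast
  rw [show v + ((i : ℝ) + 1) + 1 = v + 1 + i + 1 by ring]
  field_simp

lemma abs_besselTerm_le {v x R : ℝ} (hx : |x| ≤ R) (i : ℕ) :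
    |besselTerm v x i| ≤ |besselTerm v R i| := by
  simp only [besselTerm, abs_div, abs_pow]
  exact div_le_div_of_nonneg_right
    (pow_le_pow_left₀ (abs_nonneg x) (hx.trans (le_abs_self R)) i) (abs_nonneg _)

lemma hasDerivAt_besselSeries (v x : ℝ) :
    HasDerivAt (besselSeries v) (besselSeries (v + 1) x) x := by
  have hx : x ∈ Metric.ball (0 : ℝ) (|x| + 1) := by simp
  have htail : HasDerivAt (fun y => ∑' i, besselTerm v y (i + 1)) (besselSeries (v + 1) x) x :=
    hasDerivAt_tsum_of_isPreconnected (summable_abs_besselTerm (v + 1) (|x| + 1))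
      Metric.isOpen_ball (convex_ball _ _).isPreconnected
      (fun i y _ => hasDerivAt_besselTerm_succ v y i)
      (fun i y hy => abs_besselTerm_le (by simpa using (Metric.mem_ball.mp hy).le) i) hx
      ((summable_nat_add_iff 1).mpr (summable_besselTerm v x)) hx
  have hsplit : besselSeries v = fun y => besselTerm v y 0 + ∑' i, besselTerm v y (i + 1) :=
    funext fun y => (summable_besselTerm v y).tsum_eq_zero_add
  rw [hsplit]
  simpa [besselTerm] using htail.const_add (besselTerm v x 0)

lemma differentiable_besselSeries (v : ℝ) : Differentiable ℝ (besselSeries v) :=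
  fun x => (hasDerivAt_besselSeries v x).differentiableAt

lemma deriv_besselSeries (v : ℝ) : deriv (besselSeries v) = besselSeries (v + 1) :=
  funext fun x => (hasDerivAt_besselSeries v x).deriv

lemma contDiff_besselSeries (v : ℝ) (n : ℕ) : ContDiff ℝ n (besselSeries v) := by
  induction n generalizing v with
  | zero => exact contDiff_zero.mpr (differentiable_besselSeries v).continuous
  | succ n ih =>
    rw [Nat.cast_succ, contDiff_succ_iff_deriv, deriv_besselSeries]
    exact ⟨differentiable_besselSeries v, by simp, ih (v + 1)⟩

lemma besselTerm_zero (v x : ℝ) : besselTerm v x 0 = (v + 1) * besselTerm (v + 1) x 0 := by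
  simp only [besselTerm, pow_zero, CharP.cast_eq_zero, zero_add, Gamma_one, one_mul, add_zero,
    one_div, inv_Gamma_eq_self_mul_inv_Gamma_add_one (v + 1)]

lemma besselTerm_succ (v x : ℝ) (i : ℕ) :
    besselTerm v x (i + 1) =
      (v + 1) * besselTerm (v + 1) x (i + 1) + x * besselTerm (v + 2) x i := by
  have hΓ : Gamma ((i + 1 : ℕ) + 1) = (i + 1) * Gamma (i + 1) := by
    push_cast; exact Gamma_add_one (by positivity)
  have hinv := inv_Gamma_eq_self_mul_inv_Gamma_add_one (v + i + 2)
  have hi : Gamma (i + 1) ≠ 0 := (Gamma_pos_of_pos (by positivity)).ne'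
  simp only [besselTerm, div_eq_mul_inv, mul_inv, hΓ]
  push_cast
  rw [show v + (i + 1 : ℝ) + 1 = v + i + 2 by ring, hinv,
    show v + 1 + (i + 1 : ℝ) + 1 = v + i + 2 + 1 by ring,
    show v + 2 + (i : ℝ) + 1 = v + i + 2 + 1 by ring]
  field_simp
  ring

lemma besselSeries_eq_add_mul (v x : ℝ) :
    besselSeries v x = (v + 1) * besselSeries (v + 1) x + x * besselSeries (v + 2) x := by
  have hb := (summable_nat_add_iff 1).mpr (summable_besselTerm (v + 1) x)
  have hc := summable_besselTerm (v + 2) x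
  simp only [besselSeries]
  rw [(summable_besselTerm v x).tsum_eq_zero_add,
    (summable_besselTerm (v + 1) x).tsum_eq_zero_add, tsum_congr (besselTerm_succ v x),
    (hb.mul_left _).tsum_add (hc.mul_left _), tsum_mul_left, tsum_mul_left, besselTerm_zero]
  ring

noncomputable def besselWeight (v c x : ℝ) : ℝ := x ^ v * exp (-c * x) * besselSeries v x

lemma wBessel_eq_besselWeight (v c : ℝ) {x : ℝ} (hx : 0 < x) :
    wBessel v c x = besselWeight v c x := by
  have hsq : (2 * √x) ^ 2 / 4 = x := by rw [mul_pow, sq_sqrt hx.le]; ring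
  have hpow : x ^ (v / 2) * √x ^ v = x ^ v := by
    rw [sqrt_eq_rpow, ← rpow_mul hx.le, ← rpow_add hx]; ring_nf
  rw [wBessel, besselI_eq_besselSeries, hsq, mul_div_cancel_left₀ _ two_ne_zero, besselWeight,
    ← hpow]
  ring

lemma contDiffAt_besselWeight (v c : ℝ) {x : ℝ} (hx : 0 < x) (n : ℕ) :
    ContDiffAt ℝ n (besselWeight v c) x :=
  ((contDiffAt_rpow_const_of_ne hx.ne').mul (by fun_prop)).mul
    (contDiff_besselSeries v n).contDiffAt

lemma hasDerivAt_besselWeight (v c : ℝ) {x : ℝ} (hx : 0 < x) :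
    HasDerivAt (besselWeight v c) (besselWeight (v - 1) c x - c * besselWeight v c x) x := by
  have hpow : HasDerivAt (fun y => y ^ v) (v * x ^ (v - 1)) x :=
    hasDerivAt_rpow_const (Or.inl hx.ne')
  have hexp : HasDerivAt (fun y => exp (-c * y)) (exp (-c * x) * -c) x := by
    simpa using ((hasDerivAt_id x).const_mul (-c)).exp
  refine ((hpow.mul hexp).mul (hasDerivAt_besselSeries v x)).congr_deriv ?_
  have hrec := besselSeries_eq_add_mul (v - 1) x
  rw [sub_add_cancel, show v - 1 + 2 = v + 1 by ring] at hrec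
  have hx1 : x ^ v = x ^ (v - 1) * x := by rw [← rpow_add_one hx.ne', sub_add_cancel]
  simp only [besselWeight, Pi.mul_apply, hrec, hx1]
  ring

lemma mul_besselWeight (v c : ℝ) {x : ℝ} (hx : 0 < x) :
    x * besselWeight v c x = (v + 1) * besselWeight (v + 1) c x + besselWeight (v + 2) c x := by
  have h1 : x ^ (v + 1) = x ^ v * x := rpow_add_one hx.ne' v
  have h2 : x ^ (v + 2) = x ^ v * x * x := by rw [← h1, ← rpow_add_one hx.ne']; ring_nf
  simp only [besselWeight, besselSeries_eq_add_mul v x, h1, h2]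
  ring

theorem iteratedDeriv_fun_id_mul {𝕜 : Type*} [NontriviallyNormedField 𝕜] {f : 𝕜 → 𝕜}
    {x : 𝕜} {n : ℕ} (hf : ContDiffAt 𝕜 n f x) :
    iteratedDeriv n (fun y => y * f y) x =
      x * iteratedDeriv n f x + n * iteratedDeriv (n - 1) f x := by
  rw [iteratedDeriv_fun_mul (f := fun y => y) contDiffAt_id hf]
  rcases n with _ | n
  · simp
  · rw [Finset.sum_range_succ', Finset.sum_range_succ', Finset.sum_eq_zero]
    · simp [add_comm]
    · intro i _
      simp [iteratedDeriv_fun_id]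

lemma iteratedDeriv_succ_besselWeight (v c : ℝ) {x : ℝ} (hx : 0 < x) (k : ℕ) :
    iteratedDeriv (k + 1) (besselWeight (v + 1) c) x =
      iteratedDeriv k (besselWeight v c) x - c * iteratedDeriv k (besselWeight (v + 1) c) x := by
  have hderiv : deriv (besselWeight (v + 1) c) =ᶠ[𝓝 x]
      fun y => besselWeight v c y - c * besselWeight (v + 1) c y := by
    filter_upwards [Ioi_mem_nhds hx] with y hy
    simpa using (hasDerivAt_besselWeight (v + 1) c hy).deriv
  rw [iteratedDeriv_succ', hderiv.iteratedDeriv_eq, iteratedDeriv_fun_sub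
    (contDiffAt_besselWeight _ _ hx k) (contDiffAt_const.mul (contDiffAt_besselWeight _ _ hx k)),
    iteratedDeriv_const_mul_field]

lemma mul_iteratedDeriv_besselWeight (v c : ℝ) {x : ℝ} (hx : 0 < x) (n : ℕ) :
    x * iteratedDeriv n (besselWeight v c) x =
      (v + 1) * iteratedDeriv n (besselWeight (v + 1) c) x +
        iteratedDeriv n (besselWeight (v + 2) c) x -
          n * iteratedDeriv (n - 1) (besselWeight v c) x := by
  have hmul : (fun y => y * besselWeight v c y) =ᶠ[𝓝 x]
      fun y => (v + 1) * besselWeight (v + 1) c y + besselWeight (v + 2) c y := by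
    filter_upwards [Ioi_mem_nhds hx] with y hy using mul_besselWeight v c hy
  have hleibniz := iteratedDeriv_fun_id_mul (contDiffAt_besselWeight v c hx n)
  rw [hmul.iteratedDeriv_eq, iteratedDeriv_fun_add
    (contDiffAt_const.mul (contDiffAt_besselWeight _ _ hx n)) (contDiffAt_besselWeight _ _ hx n),
    iteratedDeriv_const_mul_field] at hleibniz
  linarith

lemma Qt_eq_iteratedDeriv_besselWeight (n : ℕ) (α c : ℝ) {x : ℝ} (hx : 0 < x) :
    Qt n α c x = iteratedDeriv n (besselWeight (α + n) c) x :=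
  EventuallyEq.iteratedDeriv_eq n <| by
    filter_upwards [Ioi_mem_nhds hx] with y hy using wBessel_eq_besselWeight _ _ hy

theorem Qt_four_point_recurrence_general (n : ℕ) (α c x : ℝ) (hc : 0 < c) (hx : 0 < x) :
    x * Qt n α c x =
      (1 / c ^ 2) * Qt (n + 2) α c x - ((c * (α + n + 1) + 2) / c ^ 2) * Qt (n + 1) α c x +
        ((c * (α + 2 * n + 1) + 1) / c ^ 2) * Qt n α c x - ((n : ℝ) / c) * Qt (n - 1) α c x := by
  have hQ (k : ℕ) := Qt_eq_iteratedDeriv_besselWeight k α c hx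
  have hprev : (n : ℝ) * Qt (n - 1) α c x =
      n * (iteratedDeriv n (besselWeight (α + n) c) x +
        c * iteratedDeriv (n - 1) (besselWeight (α + n) c) x) := by
    rcases n with _ | m
    · simp
    · rw [hQ, Nat.add_sub_cancel, Nat.cast_succ, ← add_assoc,
        iteratedDeriv_succ_besselWeight _ _ hx]
      ring
  have hxQ := mul_iteratedDeriv_besselWeight (α + n) c hx n
  have hQ₁ := iteratedDeriv_succ_besselWeight (α + n) c hx n
  have hW₂ := iteratedDeriv_succ_besselWeight (α + n + 1) c hx n
  have hQ₂ := iteratedDeriv_succ_besselWeight (α + n + 1) c hx (n + 1)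
  rw [hQ n, hQ (n + 1), hQ (n + 2)]
  push_cast
  simp only [← add_assoc, show α + n + 1 + 1 = α + n + 2 by ring] at *
  field_simp
  linear_combination c ^ 2 * hxQ - hQ₂ + c * hW₂ + (c * (α + n + 1) + 1) * hQ₁ + c * hprev

theorem Qt_four_point_recurrence (n : ℕ) (hn : 1 ≤ n) (α c x : ℝ) (hα : -1 < α) (hc : 0 < c)
    (hx : 0 < x) :
    x * Qt n α c x =
      (1 / c ^ 2) * Qt (n + 2) α c x - ((c * (α + n + 1) + 2) / c ^ 2) * Qt (n + 1) α c x +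
        ((c * (α + 2 * n + 1) + 1) / c ^ 2) * Qt n α c x - ((n : ℝ) / c) * Qt (n - 1) α c x :=
  Qt_four_point_recurrence_general n α c x hc hx
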